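/- Let n ≥ 2 and D ≥ 1 be integers, let r_0, …, r_{D−1} be independent random variables each uniformly distributed on {0, 1, …, n−1}, and for ℓ ∈ {1,…,n−1} define μ(ℓ) = |Σ_{s=0}^{D−1} exp(i 2π ℓ r_s / n)| / D. Then with probability at least 0.2 over the choice of r_0, …, r_{D−1}, one has max_{1 ≤ ℓ ≤ n−1} μ(ℓ) < 2 √(log(5n) / D). -/

import Mathlib

/-!
Fix `1 ≤ ℓ ≤ n - 1`. The terms `exp (2πi ℓ r_s / n)` are independent, bounded by `1`, and have
mean zero because the `n`-th roots of unity `exp (2πi ℓ m / n)`, `m < n`, sum to zero. Hoeffding's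
inequality, applied to the real and to the imaginary part, bounds the probability that their sum
has norm at least `√2 ε` by `4 exp (-ε² / 2D)`; with `ε = √(2 D log (5n))` this is `4 / (5n)`.
A union bound over the `n - 1` frequencies leaves a failure probability of at most `4 / 5`.
-/

open scoped ENNReal
open MeasureTheory ProbabilityTheory Real Finset

theorem geom_sum_eq_zero_of_pow_eq_one {K : Type*} [Field K] {x : K} {n : ℕ} (hx : x ≠ 1)
    (hxn : x ^ n = 1) : ∑ i ∈ range n, x ^ i = 0 := by
  rw [geom_sum_eq hx, hxn, sub_self, zero_div]

theorem sum_range_exp_two_pi_I_mul_eq_zero {n ℓ : ℕ} (hℓ : ℓ ≠ 0) (hℓn : ℓ < n) :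
    ∑ m ∈ range n, Complex.exp (Complex.I * (2 * π * ℓ * m / n)) = 0 := by
  set ζ := Complex.exp (2 * π * Complex.I / n)
  have hζ : IsPrimitiveRoot ζ n := Complex.isPrimitiveRoot_exp n (by omega)
  have hterm (m : ℕ) : Complex.exp (Complex.I * (2 * π * ℓ * m / n)) = (ζ ^ ℓ) ^ m := by
    rw [← Complex.exp_nat_mul, ← Complex.exp_nat_mul]
    ring_nf
  rw [sum_congr rfl fun m _ => hterm m]
  refine geom_sum_eq_zero_of_pow_eq_one (hζ.pow_ne_one_of_pos_of_lt hℓ hℓn) ?_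
  rw [← pow_mul, mul_comm, pow_mul, hζ.pow_eq_one, one_pow]

theorem Complex.le_abs_re_or_le_abs_im {z : ℂ} {ε : ℝ} (h : √2 * ε ≤ ‖z‖) :
    ε ≤ |z.re| ∨ ε ≤ |z.im| := by
  rw [← le_max_iff]
  exact le_of_mul_le_mul_left (h.trans (Complex.norm_le_sqrt_two_mul_max z)) (by positivity)

section Probability

variable {Ω : Type*} [MeasurableSpace Ω] {μ : Measure Ω}

theorem ProbabilityTheory.HasSubgaussianMGF.measureReal_abs_ge_le {X : Ω → ℝ} {c : NNReal}
    (h : HasSubgaussianMGF X c μ) {ε : ℝ} (hε : 0 ≤ ε) :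
    μ.real {ω | ε ≤ |X ω|} ≤ 2 * exp (-ε ^ 2 / (2 * c)) := by
  have hsplit : {ω | ε ≤ |X ω|} = {ω | ε ≤ X ω} ∪ {ω | ε ≤ (-X) ω} := by
    ext ω
    simp only [Set.mem_ofPred_eq, Set.mem_union, Pi.neg_apply, le_abs]
  rw [hsplit, two_mul]
  exact (measureReal_union_le _ _).trans
    (add_le_add (h.measure_ge_le hε) (h.neg.measure_ge_le hε))

theorem measureReal_abs_sum_ge_le [IsProbabilityMeasure μ] {ι : Type*} [Fintype ι]
    {X : ι → Ω → ℝ} (hindep : iIndepFun X μ) (hmeas : ∀ i, AEMeasurable (X i) μ)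
    (hbdd : ∀ i ω, |X i ω| ≤ 1) (hmean : ∀ i, μ[X i] = 0) {ε : ℝ} (hε : 0 ≤ ε) :
    μ.real {ω | ε ≤ |∑ i, X i ω|} ≤ 2 * exp (-ε ^ 2 / (2 * Fintype.card ι)) := by
  have hsubG (i : ι) (_ : i ∈ univ) : HasSubgaussianMGF (X i) 1 μ := by
    convert hasSubgaussianMGF_of_mem_Icc_of_integral_eq_zero (hmeas i)
      (ae_of_all _ fun ω => abs_le.mp (hbdd i ω)) (hmean i)
    norm_num
  simpa using (HasSubgaussianMGF.sum_of_iIndepFun hindep hsubG).measureReal_abs_ge_le hε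

theorem one_sub_card_mul_le_measureReal_biInter [IsProbabilityMeasure μ] {β : Type*}
    (s : Finset β) (A : β → Set Ω) {δ : ℝ} (h : ∀ b ∈ s, μ.real (A b)ᶜ ≤ δ) :
    1 - #s * δ ≤ μ.real (⋂ b ∈ s, A b) := by
  have hcompl : μ.real (⋂ b ∈ s, A b)ᶜ ≤ #s * δ := by
    rw [Set.compl_iInter₂]
    calc _ ≤ ∑ b ∈ s, μ.real (A b)ᶜ := measureReal_biUnion_finset_le s _
      _ ≤ ∑ _ ∈ s, δ := sum_le_sum h
      _ = #s * δ := by rw [sum_const, nsmul_eq_mul]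
  have hunion := measureReal_union_le (μ := μ) (⋂ b ∈ s, A b) (⋂ b ∈ s, A b)ᶜ
  rw [Set.union_compl_self, probReal_univ] at hunion
  linarith

section Uniform

variable {n : ℕ}

theorem map_eq_smul_sum_dirac_of_uniform {R : Ω → ℕ} (hR : Measurable R)
    (hunif : ∀ m, μ {ω | R ω = m} = if m < n then (n : ℝ≥0∞)⁻¹ else 0) :
    μ.map R = (n : ℝ≥0∞)⁻¹ • ∑ m ∈ range n, Measure.dirac m := by
  refine Measure.ext_iff_singleton.mpr fun m => ?_
  rw [Measure.map_apply hR (measurableSet_singleton m)]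
  simp [Set.preimage, hunif, Set.indicator]

theorem integral_comp_of_uniform {E : Type*} [NormedAddCommGroup E] [NormedSpace ℝ E]
    [CompleteSpace E] {R : Ω → ℕ} (hR : Measurable R)
    (hunif : ∀ m, μ {ω | R ω = m} = if m < n then (n : ℝ≥0∞)⁻¹ else 0) (g : ℕ → E) :
    ∫ ω, g (R ω) ∂μ = (n : ℝ)⁻¹ • ∑ m ∈ range n, g m := by
  rw [← integral_map hR.aemeasurable StronglyMeasurable.of_discrete.aestronglyMeasurable,
    map_eq_smul_sum_dirac_of_uniform hR hunif, integral_smul_measure,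
    integral_finsetSum_measure fun m _ => integrable_dirac enorm_lt_top]
  simp

variable [IsProbabilityMeasure μ] {ι : Type*} [Fintype ι] {r : ι → Ω → ℕ}

theorem measureReal_norm_sum_comp_ge_le (hmeas : ∀ i, Measurable (r i)) (hindep : iIndepFun r μ)
    (hunif : ∀ i m, μ {ω | r i ω = m} = if m < n then (n : ℝ≥0∞)⁻¹ else 0)
    {f : ℕ → ℂ} (hf : ∀ m, ‖f m‖ ≤ 1) (hf0 : ∑ m ∈ range n, f m = 0) {ε : ℝ} (hε : 0 ≤ ε) :
    μ.real {ω | √2 * ε ≤ ‖∑ i, f (r i ω)‖} ≤ 4 * exp (-ε ^ 2 / (2 * Fintype.card ι)) := by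
  have hpart (φ : ℂ →L[ℝ] ℝ) (hφ : ∀ z, |φ z| ≤ ‖z‖) :
      μ.real {ω | ε ≤ |φ (∑ i, f (r i ω))|} ≤ 2 * exp (-ε ^ 2 / (2 * Fintype.card ι)) := by
    simp only [map_sum]
    refine measureReal_abs_sum_ge_le (hindep.comp (fun _ => φ ∘ f) fun _ => measurable_from_top)
      (fun i => (measurable_from_top.comp (hmeas i)).aemeasurable)
      (fun i ω => (hφ _).trans (hf _)) (fun i => ?_) hε
    rw [Function.comp_def, integral_comp_of_uniform (hmeas i) (hunif i) (φ ∘ f)]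
    simp [← map_sum, hf0]
  have hsub : {ω | √2 * ε ≤ ‖∑ i, f (r i ω)‖} ⊆
      {ω | ε ≤ |Complex.reCLM (∑ i, f (r i ω))|} ∪ {ω | ε ≤ |Complex.imCLM (∑ i, f (r i ω))|} :=
    fun ω hω => Complex.le_abs_re_or_le_abs_im hω
  calc _ ≤ _ := measureReal_mono hsub
    _ ≤ _ := measureReal_union_le _ _
    _ ≤ _ := add_le_add (hpart _ Complex.abs_re_le_norm) (hpart _ Complex.abs_im_le_norm)
    _ = _ := by ring

theorem measureReal_norm_sum_exp_div_card_ge_le [Nonempty ι] (hmeas : ∀ i, Measurable (r i))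
    (hindep : iIndepFun r μ)
    (hunif : ∀ i m, μ {ω | r i ω = m} = if m < n then (n : ℝ≥0∞)⁻¹ else 0)
    {ℓ : ℕ} (hℓ : ℓ ≠ 0) (hℓn : ℓ < n) :
    μ.real {ω | 2 * √(log (5 * n) / Fintype.card ι) ≤
        ‖∑ i, Complex.exp (Complex.I * (2 * π * ℓ * (r i ω) / n))‖ / Fintype.card ι} ≤
      4 / (5 * n) := by
  set D : ℝ := (Fintype.card ι : ℝ)
  have hD : 0 < D := by simp [D, Fintype.card_pos]
  have hn : (1 : ℝ) ≤ n := by norm_cast; omega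
  have hlog : 0 ≤ log (5 * n) := log_nonneg (by linarith)
  set ε := √(2 * D * log (5 * n))
  have hthreshold : 2 * √(log (5 * n) / D) * D = √2 * ε := by
    rw [← sqrt_mul zero_le_two, show 2 * (2 * D * log (5 * n)) = (2 * D) ^ 2 * (log (5 * n) / D)
      by field_simp, sqrt_mul (by positivity), sqrt_sq (by positivity)]
    ring
  calc _ ≤ μ.real {ω | √2 * ε ≤ ‖∑ i, Complex.exp (Complex.I * (2 * π * ℓ * (r i ω) / n))‖} :=
        measureReal_mono fun ω hω => by
          rwa [Set.mem_ofPred_eq, le_div_iff₀ hD, hthreshold] at hω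
    _ ≤ 4 * exp (-ε ^ 2 / (2 * D)) :=
        measureReal_norm_sum_comp_ge_le hmeas hindep hunif (fun m => by simp [Complex.norm_exp])
          (sum_range_exp_two_pi_I_mul_eq_zero hℓ hℓn) (sqrt_nonneg _)
    _ = 4 / (5 * n) := by
        rw [sq_sqrt (by positivity), neg_div, mul_assoc, mul_div_mul_left _ _ (by positivity),
          mul_div_cancel_left₀ _ hD.ne', exp_neg, exp_log (by linarith)]
        ring

end Uniform

end Probability

theorem coherence_bound_whp
    {Ω : Type*} [MeasurableSpace Ω] (P : Measure Ω) [IsProbabilityMeasure P]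
    (n D : ℕ) (hD : 1 ≤ D)
    (r : Fin D → Ω → ℕ) (hmeas : ∀ s, Measurable (r s))
    (hindep : iIndepFun r P)
    (hunif : ∀ s : Fin D, ∀ m : ℕ,
      P {ω | r s ω = m} = if m < n then ((n : ENNReal))⁻¹ else 0) :
    ENNReal.ofReal 0.2 ≤
      P {ω | ∀ ℓ : ℕ, 1 ≤ ℓ → ℓ ≤ n - 1 →
        ‖∑ s, Complex.exp (Complex.I * (2 * π * ℓ * (r s ω) / n))‖ / D <
          2 * Real.sqrt (Real.log (5 * n) / D)} := by
  have hbad : ∀ ℓ ∈ Icc 1 (n - 1), P.real {ω |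
      ‖∑ s, Complex.exp (Complex.I * (2 * π * ℓ * (r s ω) / n))‖ / D <
        2 * √(log (5 * n) / D)}ᶜ ≤ 4 / (5 * n) := by
    intro ℓ hℓ
    obtain ⟨hℓ1, hℓn⟩ := mem_Icc.mp hℓ
    have : Nonempty (Fin D) := Fin.pos_iff_nonempty.mp hD
    simpa [Set.compl_ofPred] using
      measureReal_norm_sum_exp_div_card_ge_le hmeas hindep hunif (ℓ := ℓ) (by omega) (by omega)
  have hmargin : (0.2 : ℝ) ≤ 1 - ((n - 1 : ℕ) : ℝ) * (4 / (5 * n)) := by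
    have : ((n - 1 : ℕ) : ℝ) * (4 / (5 * n)) ≤ 4 / 5 * (n / n) := by
      rw [show 4 / 5 * ((n : ℝ) / n) = n * (4 / (5 * n)) by ring]
      gcongr
      exact Nat.sub_le n 1
    linarith [div_self_le_one (n : ℝ)]
  have hgood := one_sub_card_mul_le_measureReal_biInter _ _ hbad
  rw [Nat.card_Icc, add_tsub_cancel_right] at hgood
  convert ENNReal.ofReal_le_of_le_toReal (hmargin.trans hgood) using 2
  ext ω
  simp [and_imp]
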